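/- The intersection over all i ≥ n+1 of the kernels of the trimming operators T_i on the polynomial ring ℤ[x_1,x_2,...] equals ℤ[x_1,...,x_n]. In particular, the intersection of all kernels ker(T_i) for i ≥ 1 equals ℤ. -/

import Mathlib

open MvPolynomial

/-- The Bergeron–Sottile map `R i` (1-based `i`): set the variable `x_i` to zero
and shift every later variable down by one.  Variables are 0-indexed: `X j`
represents `x_{j+1}`. -/
noncomputable def R (i : ℕ) : MvPolynomial ℕ ℤ →ₐ[ℤ] MvPolynomial ℕ ℤ :=
  aeval (fun j => if j + 1 < i then X j else if j + 1 = i then 0 else X (j - 1))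

/-- The trimming operator `T i = (R (i+1) f - R i f) / x_i` (1-based `i`);
the difference `R (i+1) f - R i f` is always divisible by `x_i = X (i-1)`,
so the exact quotient is computed by `divMonomial`. -/
noncomputable def T (i : ℕ) (f : MvPolynomial ℕ ℤ) : MvPolynomial ℕ ℤ :=
  (R (i + 1) f - R i f).divMonomial (Finsupp.single (i - 1) 1)

/-- `f` only involves the variables `x_1, …, x_n`. -/
def InVars (n : ℕ) (f : MvPolynomial ℕ ℤ) : Prop :=
  ∀ d ∈ f.support, ∀ j, n ≤ j → d j = 0

/-- `f` is a quasisymmetric polynomial in the variables `x_1, …, x_n`. -/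
def IsQSym (n : ℕ) (f : MvPolynomial ℕ ℤ) : Prop :=
  ∀ (k : ℕ) (a : Fin k → ℕ), (∀ l, 1 ≤ a l) →
    ∀ (i j : Fin k → ℕ), StrictMono i → StrictMono j →
      (∀ l, i l < n) → (∀ l, j l < n) →
      coeff (∑ l, Finsupp.single (i l) (a l)) f =
        coeff (∑ l, Finsupp.single (j l) (a l)) f

/-!
`R (k+1)` is a left inverse of the renaming along the embedding `skip k : ℕ ↪ ℕ` that
misses `k`, and it kills every monomial containing `X k`; hence
`coeff e (R (k+1) f) = coeff (e.embDomain (skip k)) f`. So `T (k+1) f = 0` says that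
moving the exponent at position `k` to position `k+1` never changes a coefficient of a
monomial containing `X k`. For `k ≥ n` both coefficients vanish when `f` only involves
`X 0, …, X (n-1)`. Conversely, if `f` involves some `X K` with `K ≥ n`, take `K` maximal
and a monomial `d` of `f` containing `X K`: the condition for `T (K+1)` makes the
monomial obtained by moving the exponent of `X K` to `X (K+1)` appear in `f` too,
contradicting the maximality of `K`.
-/

def skip (k : ℕ) : ℕ ↪ ℕ :=
  ⟨fun j => if j < k then j else j + 1, fun a b h => by dsimp at h; split_ifs at h <;> omega⟩

section skip

variable {k j : ℕ} {M : Type*} [Zero M]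

lemma skip_of_lt (h : j < k) : skip k j = j := if_pos h

lemma skip_of_le (h : k ≤ j) : skip k j = j + 1 := if_neg (Nat.not_lt.2 h)

lemma mem_range_skip_iff : j ∈ Set.range (skip k) ↔ j ≠ k := by
  constructor
  · rintro ⟨i, rfl⟩
    rcases lt_or_ge i k with h | h
    · rw [skip_of_lt h]; omega
    · rw [skip_of_le h]; omega
  · intro h
    rcases lt_or_gt_of_ne h with h | h
    · exact ⟨j, skip_of_lt h⟩
    · exact ⟨j - 1, by rw [skip_of_le (by omega)]; omega⟩

lemma embDomain_skip_of_lt (e : ℕ →₀ M) (h : j < k) : e.embDomain (skip k) j = e j := by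
  conv_lhs => rw [← skip_of_lt h]
  exact Finsupp.embDomain_apply_self _ _ _

lemma embDomain_skip_self (e : ℕ →₀ M) : e.embDomain (skip k) k = 0 :=
  Finsupp.embDomain_of_notMem_range _ _ _ fun h => mem_range_skip_iff.1 h rfl

lemma embDomain_skip_succ (e : ℕ →₀ M) (h : k ≤ j) :
    e.embDomain (skip k) (j + 1) = e j := by
  rw [← skip_of_le h]
  exact Finsupp.embDomain_apply_self _ _ _

lemma embDomain_skip_eq_self {e : ℕ →₀ M} (h : ∀ j, k ≤ j → e j = 0) :
    e.embDomain (skip k) = e := by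
  ext j
  rcases lt_trichotomy j k with hj | rfl | hj
  · exact embDomain_skip_of_lt e hj
  · rw [embDomain_skip_self, h j le_rfl]
  · obtain ⟨i, rfl⟩ : ∃ i, j = i + 1 := ⟨j - 1, by omega⟩
    rw [embDomain_skip_succ e (by omega), h i (by omega), h (i + 1) (by omega)]

end skip

lemma R_succ_rename_skip (k : ℕ) (p : MvPolynomial ℕ ℤ) :
    R (k + 1) (rename (skip k) p) = p := by
  have hX : (fun j => if j + 1 < k + 1 then X j else if j + 1 = k + 1 then 0 else X (j - 1))
      ∘ skip k = (X : ℕ → MvPolynomial ℕ ℤ) := by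
    funext j
    rcases lt_or_ge j k with h | h
    · simp [skip_of_lt h, h]
    · simp [skip_of_le h, show ¬ j + 1 < k by omega, show j + 1 ≠ k by omega]
  rw [_root_.R, aeval_rename, hX, aeval_X_left, AlgHom.id_apply]

lemma R_succ_monomial_of_ne_zero {k : ℕ} {d : ℕ →₀ ℕ} (hd : d k ≠ 0) (c : ℤ) :
    R (k + 1) (monomial d c) = 0 := by
  rw [_root_.R, aeval_monomial, Finsupp.prod, Finset.prod_eq_zero (Finsupp.mem_support_iff.2 hd)
    (by simp [zero_pow hd]), mul_zero]

lemma coeff_R_succ (k : ℕ) (e : ℕ →₀ ℕ) (f : MvPolynomial ℕ ℤ) :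
    coeff e (R (k + 1) f) = coeff (e.embDomain (skip k)) f := by
  induction f using MvPolynomial.induction_on' with
  | add p q hp hq => simp only [map_add, coeff_add, hp, hq]
  | monomial d c =>
    by_cases hd : d k = 0
    · have hrange : ↑d.support ⊆ Set.range (skip k) := fun j hj =>
        mem_range_skip_iff.2 fun h => Finsupp.mem_support_iff.1 hj (h ▸ hd)
      have hrename : monomial d c =
          rename (skip k) (monomial (d.comapDomain (skip k) (skip k).injective.injOn) c) := by
        rw [rename_monomial, Finsupp.mapDomain_comapDomain _ (skip k).injective _ hrange]
      rw [hrename, R_succ_rename_skip, coeff_rename_embDomain]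
    · rw [R_succ_monomial_of_ne_zero hd, coeff_zero, coeff_monomial, if_neg]
      rintro rfl
      exact hd (embDomain_skip_self e)

lemma coeff_T_succ (k : ℕ) (f : MvPolynomial ℕ ℤ) (d : ℕ →₀ ℕ) :
    coeff d (T (k + 1) f) = coeff ((Finsupp.single k 1 + d).embDomain (skip (k + 1))) f -
      coeff ((Finsupp.single k 1 + d).embDomain (skip k)) f := by
  rw [T, Nat.add_sub_cancel, coeff_divMonomial, coeff_sub, coeff_R_succ, coeff_R_succ]

lemma T_succ_eq_zero_iff (k : ℕ) (f : MvPolynomial ℕ ℤ) :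
    T (k + 1) f = 0 ↔ ∀ e : ℕ →₀ ℕ, e k ≠ 0 →
      coeff (e.embDomain (skip (k + 1))) f = coeff (e.embDomain (skip k)) f := by
  constructor
  · intro h e he
    have hsplit : Finsupp.single k 1 + (e - Finsupp.single k 1) = e :=
      add_tsub_cancel_of_le (Finsupp.single_le_iff.2 (Nat.one_le_iff_ne_zero.2 he))
    have := coeff_T_succ k f (e - Finsupp.single k 1)
    rw [h, coeff_zero, hsplit] at this
    exact sub_eq_zero.1 this.symm
  · intro h
    ext d
    rw [coeff_T_succ, coeff_zero, h _ (by simp), sub_self]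

lemma inVars_iff_forall_mem_vars {n : ℕ} {f : MvPolynomial ℕ ℤ} :
    InVars n f ↔ ∀ i ∈ f.vars, i < n := by
  simp only [InVars, mem_vars_iff_mem_support, Finsupp.mem_support_iff]
  constructor
  · rintro h i ⟨d, hd, hdi⟩
    by_contra hi
    exact hdi (h d hd i (by omega))
  · intro h d hd j hj
    by_contra hdj
    exact absurd (h j ⟨d, hd, hdj⟩) (by omega)

lemma coeff_eq_zero_of_inVars {n j : ℕ} {f : MvPolynomial ℕ ℤ} (hf : InVars n f)
    {d : ℕ →₀ ℕ} (hj : n ≤ j) (hdj : d j ≠ 0) : coeff d f = 0 := by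
  by_contra h
  exact hdj (hf d (mem_support_iff.2 h) j hj)

lemma T_eq_zero_of_inVars {n i : ℕ} {f : MvPolynomial ℕ ℤ} (hf : InVars n f)
    (hi : n + 1 ≤ i) : T i f = 0 := by
  obtain ⟨k, rfl⟩ : ∃ k, i = k + 1 := ⟨i - 1, by omega⟩
  refine (T_succ_eq_zero_iff k f).2 fun e he => ?_
  rw [coeff_eq_zero_of_inVars hf (j := k) (by omega)
      (by rwa [embDomain_skip_of_lt e (by omega)]),
    coeff_eq_zero_of_inVars hf (j := k + 1) (by omega)
      (by rwa [embDomain_skip_succ e le_rfl])]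

lemma inVars_of_T_eq_zero {n : ℕ} {f : MvPolynomial ℕ ℤ}
    (h : ∀ i, n + 1 ≤ i → T i f = 0) : InVars n f := by
  rw [inVars_iff_forall_mem_vars]
  by_contra! ⟨i, hi, hni⟩
  set K := f.vars.max' ⟨i, hi⟩
  have hnK : n ≤ K := hni.trans (f.vars.le_max' i hi)
  obtain ⟨d, hd, hdK⟩ := (mem_vars_iff_mem_support K).1 (f.vars.max'_mem ⟨i, hi⟩)
  have hd_above : ∀ j, K + 1 ≤ j → d j = 0 := fun j hj => by
    by_contra hdj
    have := f.vars.le_max' j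
      ((mem_vars_iff_mem_support j).2 ⟨d, hd, Finsupp.mem_support_iff.2 hdj⟩)
    omega
  have hshift := (T_succ_eq_zero_iff K f).1 (h (K + 1) (by omega)) d
    (Finsupp.mem_support_iff.1 hdK)
  rw [embDomain_skip_eq_self hd_above] at hshift
  have hmem : K + 1 ∈ f.vars := (mem_vars_iff_mem_support _).2
    ⟨d.embDomain (skip K), mem_support_iff.2 (hshift ▸ mem_support_iff.1 hd),
      by rwa [Finsupp.mem_support_iff, embDomain_skip_succ d le_rfl,
        ← Finsupp.mem_support_iff]⟩
  have := f.vars.le_max' _ hmem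
  omega

lemma forall_T_eq_zero_iff_inVars (n : ℕ) (f : MvPolynomial ℕ ℤ) :
    (∀ i, n + 1 ≤ i → T i f = 0) ↔ InVars n f :=
  ⟨inVars_of_T_eq_zero, fun hf _ hi => T_eq_zero_of_inVars hf hi⟩

lemma inVars_zero_iff {f : MvPolynomial ℕ ℤ} : InVars 0 f ↔ ∃ c : ℤ, f = C c := by
  rw [inVars_iff_forall_mem_vars]
  constructor
  · intro h
    exact ⟨coeff 0 f, vars_eq_empty_iff_eq_C.1 (Finset.eq_empty_of_forall_notMem fun i hi =>
      Nat.not_lt_zero i (h i hi))⟩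
  · rintro ⟨c, rfl⟩ i hi
    exact absurd hi (vars_C (R := ℤ) ▸ Finset.notMem_empty i)

/-- `⋂_{i ≥ n+1} ker T_i = ℤ[x_1,…,x_n]`, and in particular
`⋂_{i ≥ 1} ker T_i = ℤ`. -/
theorem kernel_of_trimmings (n : ℕ) :
    (∀ f : MvPolynomial ℕ ℤ, (∀ i, n + 1 ≤ i → T i f = 0) ↔ InVars n f) ∧
      (∀ f : MvPolynomial ℕ ℤ,
        (∀ i, 1 ≤ i → T i f = 0) ↔ ∃ c : ℤ, f = C c) :=
  ⟨forall_T_eq_zero_iff_inVars n,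
    fun f => (forall_T_eq_zero_iff_inVars 0 f).trans inVars_zero_iff⟩
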